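/- arXiv:1102.4531 — 4 statements merged into one kernel-verified Lean document; each statement's English description precedes it below -/
import Mathlib

section
/- Every finitely generated commutative monoid P admits a coequalizer presentation: there exist natural numbers n₁, n₂ and monoid homomorphisms v₁, v₂ : ℕ^{n₂} → ℕ^{n₁} and a surjective homomorphism q : ℕ^{n₁} → P such that q is the coequalizer of v₁ and v₂ in the category of commutative monoids. -/
/-! Choosing generators gives a surjection `q : ℕ^n₁ → P`, and a homomorphism out of `P` is the
same as one out of `ℕ^n₁` that is constant on the classes of `ker q`. So it suffices that `ker q`
is generated by finitely many pairs, which then become the images of the basis vectors under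
`v₁` and `v₂`. This is Rédei's theorem, reduced to Hilbert's basis theorem: a congruence `c` on `M`
is recovered from the ideal of `ℤ[M]` spanned by the differences `[a] - [b]` with `c a b`, because
that ideal is killed by `ℤ[M] → ℤ[M/c]`; as the ideal is finitely generated, finitely many of
these differences already span it. -/

open AddMonoidAlgebra

namespace AddCon

variable {M : Type*} [AddCommMonoid M] {k : Type*} [CommRing k] [Nontrivial k]

theorem single_sub_single_mem_ker_iff {c : AddCon M} {a b : M} :
    single a 1 - single b 1 ∈ RingHom.ker (mapDomainRingHom k c.mk') ↔ c a b := by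
  rw [RingHom.mem_ker, map_sub, sub_eq_zero, mapDomainRingHom_apply, mapDomainRingHom_apply,
    mapDomain_single, mapDomain_single, single_left_inj one_ne_zero]
  exact AddCon.eq c

variable (k) in
noncomputable def differenceIdeal (c : AddCon M) : Ideal k[M] :=
  Ideal.span {x | ∃ a b, c a b ∧ single a 1 - single b 1 = x}

theorem rel_of_single_sub_single_mem {c : AddCon M} {a b : M}
    (h : single a 1 - single b 1 ∈ differenceIdeal k c) : c a b := by
  refine single_sub_single_mem_ker_iff.1 ((Ideal.span_le.2 ?_) h)
  rintro _ ⟨a, b, hab, rfl⟩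
  exact single_sub_single_mem_ker_iff.2 hab

variable (k) in
theorem exists_finite_addConGen_eq_of_isNoetherianRing [IsNoetherianRing k[M]] (c : AddCon M) :
    ∃ r : Set (M × M), r.Finite ∧ addConGen (fun a b => (a, b) ∈ r) = c := by
  obtain ⟨s, hsS, hspan⟩ := (Submodule.fg_span_iff_fg_span_finset_subset _).1
    (IsNoetherian.noetherian (differenceIdeal k c))
  have hsS : ∀ x ∈ s, ∃ a b, c a b ∧ single a 1 - single b 1 = x := hsS
  choose! lhs rhs hrel using hsS
  set r := (fun x => (lhs x, rhs x)) '' s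
  refine ⟨r, s.finite_toSet.image _, le_antisymm (addConGen_le.2 ?_) fun a b hab => ?_⟩
  · rintro _ _ ⟨x, hx, hxe⟩
    cases hxe
    exact (hrel x hx).1
  · have hle : differenceIdeal k c ≤ differenceIdeal k (addConGen (fun a b => (a, b) ∈ r)) := by
      rw [differenceIdeal, Ideal.span, hspan, Submodule.span_le]
      intro x hx
      exact Ideal.subset_span ⟨lhs x, rhs x, AddConGen.Rel.of _ _ ⟨x, hx, rfl⟩, (hrel x hx).2⟩
    exact rel_of_single_sub_single_mem (hle (Ideal.subset_span ⟨a, b, hab, rfl⟩))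

theorem exists_finite_addConGen_eq [AddMonoid.FG M] (c : AddCon M) :
    ∃ r : Set (M × M), r.Finite ∧ addConGen (fun a b => (a, b) ∈ r) = c :=
  have := Algebra.FiniteType.isNoetherianRing ℤ ℤ[M]
  exists_finite_addConGen_eq_of_isNoetherianRing ℤ c

end AddCon

section Coequalizer

variable {M P T : Type*} [AddCommMonoid M] [AddCommMonoid P] [AddCommMonoid T]

theorem AddMonoidHom.existsUnique_comp_eq_of_ker_le {q : M →+ P} (hq : Function.Surjective q)
    {f : M →+ T} (h : AddCon.ker q ≤ AddCon.ker f) : ∃! g : P →+ T, g.comp q = f := by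
  let e := AddCon.quotientKerEquivOfSurjective q hq
  let g := ((AddCon.ker q).lift f h).comp e.symm.toAddMonoidHom
  have hg : g.comp q = f := by
    ext x
    change (AddCon.ker q).lift f h (e.symm (q x)) = f x
    rw [show e.symm (q x) = x from e.symm_apply_eq.2 rfl, AddCon.lift_coe]
  exact ⟨g, hg, fun g' hg' => (AddMonoidHom.cancel_right hq).1 (hg'.trans hg.symm)⟩

theorem comp_linearCombination_eq_iff_addConGen_le {ι : Type*} [Fintype ι] (p : ι → M × M)
    (f : M →+ T) :
    f.comp (Fintype.linearCombination ℕ (Prod.fst ∘ p)).toAddMonoidHom =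
        f.comp (Fintype.linearCombination ℕ (Prod.snd ∘ p)).toAddMonoidHom ↔
      addConGen (fun a b => (a, b) ∈ Set.range p) ≤ AddCon.ker f := by
  classical
  rw [AddCon.addConGen_le]
  constructor
  · rintro hf a b ⟨i, hi⟩
    simpa [hi] using DFunLike.congr_fun hf (Pi.single i 1)
  · intro h
    refine AddMonoidHom.functions_ext _ _ _ fun i n => ?_
    simp [(AddCon.ker_rel f).1 (h _ _ ⟨i, rfl⟩)]

end Coequalizer

/-- Every finitely generated commutative monoid `P` admits a coequalizer
presentation: there are `n₁ n₂ : ℕ`, homomorphisms `v₁ v₂ : ℕ^{n₂} →+ ℕ^{n₁}` and a surjective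
homomorphism `q : ℕ^{n₁} →+ P` with `q ∘ v₁ = q ∘ v₂` which is the coequalizer of `v₁` and `v₂`
in commutative monoids, i.e. every `f : ℕ^{n₁} →+ T` with `f ∘ v₁ = f ∘ v₂` factors uniquely
through `q`. -/
theorem exists_coequalizer_presentation (P : Type) [AddCommMonoid P] (hfg : AddMonoid.FG P) :
    ∃ (n₁ n₂ : ℕ) (v₁ v₂ : (Fin n₂ → ℕ) →+ (Fin n₁ → ℕ)) (q : (Fin n₁ → ℕ) →+ P),
      Function.Surjective q ∧
      q.comp v₁ = q.comp v₂ ∧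
      ∀ (T : Type) [AddCommMonoid T] (f : (Fin n₁ → ℕ) →+ T),
        f.comp v₁ = f.comp v₂ → ∃! g : P →+ T, g.comp q = f := by
  have := Module.Finite.iff_addMonoid_fg.2 hfg
  obtain ⟨n₁, q, hq⟩ := Module.Finite.exists_fin' ℕ P
  obtain ⟨r, hr, hker⟩ := (AddCon.ker q.toAddMonoidHom).exists_finite_addConGen_eq
  obtain ⟨n₂, p, -, rfl⟩ := hr.fin_param
  refine ⟨n₁, n₂, _, _, q.toAddMonoidHom, hq,
    (comp_linearCombination_eq_iff_addConGen_le p _).2 hker.le, fun T _ f hf => ?_⟩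
  refine AddMonoidHom.existsUnique_comp_eq_of_ker_le hq ?_
  exact hker ▸ (comp_linearCombination_eq_iff_addConGen_le p f).1 hf
end

section
/- Let l : ℕ ⊕ Q → M be a surjective homomorphism of commutative monoids, where Q and M are cancellative and M is torsion-free as follows: assume (a) the restriction of l to Q is injective, and (b) for every positive integer c, l(c·δ) = 0 implies c·δ = 0, where δ is the generator of the ℕ factor. Suppose further that whenever l(c₁·δ + e₁) = l(c₂·δ + e₂) with e₁, e₂ ∈ Q one has l(e₁) = l(e₂). Then l is injective, hence an isomorphism. -/
/-- Let `l : ℕ ⊕ Q → M` be a surjective homomorphism of commutative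
monoids with `Q` and `M` cancellative, `δ = (1, 0)` the generator of the `ℕ` factor, and
elements of `ℕ ⊕ Q` written `c • δ + e` with `e ∈ Q`.  Assume
(a) the restriction of `l` to `Q` is injective,
(b) for every positive integer `c`, `l (c • δ) = 0` implies `c • δ = 0`, and
(c) whenever `l (c₁ • δ + e₁) = l (c₂ • δ + e₂)` one has `l e₁ = l e₂`.
Then `l` is injective, hence an isomorphism. -/
theorem injective_of_contact_order_argument (Q M : Type)
    [AddCancelCommMonoid Q] [AddCancelCommMonoid M]
    (l : (ℕ × Q) →+ M) (hsurj : Function.Surjective l)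
    (hQ : Function.Injective fun e : Q => l ((0 : ℕ), e))
    (hδ : ∀ c : ℕ, 0 < c → l (c • ((1 : ℕ), (0 : Q))) = 0 → c • ((1 : ℕ), (0 : Q)) = 0)
    (hcomp : ∀ (c₁ c₂ : ℕ) (e₁ e₂ : Q),
      l (c₁ • ((1 : ℕ), (0 : Q)) + ((0 : ℕ), e₁)) = l (c₂ • ((1 : ℕ), (0 : Q)) + ((0 : ℕ), e₂)) →
      l ((0 : ℕ), e₁) = l ((0 : ℕ), e₂)) :
    Function.Bijective l := by
  refine ⟨fun x y hxy => ?_, hsurj⟩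
  obtain ⟨c₁, e₁⟩ := x
  obtain ⟨c₂, e₂⟩ := y
  have hsm : ∀ c : ℕ, c • ((1 : ℕ), (0 : Q)) = ((c, 0) : ℕ × Q) := by
    intro c; simp [Prod.smul_def]
  have hdecomp : ∀ (c : ℕ) (e : Q),
      c • ((1 : ℕ), (0 : Q)) + ((0 : ℕ), e) = ((c, e) : ℕ × Q) := by
    intro c e; simp [hsm, Prod.ext_iff]
  have he : l ((0 : ℕ), e₁) = l ((0 : ℕ), e₂) := by
    apply hcomp c₁ c₂; rw [hdecomp, hdecomp]; exact hxy
  have he' : e₁ = e₂ := hQ he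
  subst he'
  -- now show c₁ = c₂
  have hc : l ((c₁, 0) : ℕ × Q) = l ((c₂, 0) : ℕ × Q) := by
    have h1 : l (((c₁, 0) : ℕ × Q) + ((0 : ℕ), e₁)) = l (((c₂, 0) : ℕ × Q) + ((0 : ℕ), e₁)) := by
      simpa [Prod.ext_iff] using hxy
    rw [map_add, map_add] at h1
    exact add_right_cancel h1
  have key : ∀ a b : ℕ, a ≤ b → l ((a, 0) : ℕ × Q) = l ((b, 0) : ℕ × Q) → a = b := by
    intro a b hab hl
    obtain ⟨d, rfl⟩ := Nat.exists_eq_add_of_le hab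
    have : ((a + d, 0) : ℕ × Q) = ((a, 0) : ℕ × Q) + ((d, 0) : ℕ × Q) := by
      simp [Prod.ext_iff]
    rw [this, map_add] at hl
    nth_rewrite 1 [← add_zero (l ((a, 0) : ℕ × Q))] at hl
    have hd0 : l ((d, 0) : ℕ × Q) = 0 := (add_left_cancel hl).symm
    rcases Nat.eq_zero_or_pos d with hd | hd
    · simp [hd]
    · have := hδ d hd (by rw [hsm]; exact hd0)
      rw [hsm] at this
      have : d = 0 := (Prod.ext_iff.mp this).1
      simp [this]
  rcases le_total c₁ c₂ with h | h
  · have := key c₁ c₂ h hc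
    simp [this]
  · have := key c₂ c₁ h hc.symm
    simp [this]
end

section
/- Let u₁ : P₃ → P₁ and u₂ : P₃ → P₂ be homomorphisms of fine saturated (fs) commutative monoids. Then the pushout of u₁ and u₂ exists in the category of fs monoids, and it is computed as the saturation of the integralization of the amalgamated sum P₁ ⊕_{P₃} P₂ taken in commutative monoids. -/
/-- Saturated, expressed intrinsically for a cancellative commutative monoid. -/
def IsSaturatedAddMonoid (P : Type*) [AddCommMonoid P] : Prop :=
  ∀ a b : P, (∃ n : ℕ, 1 ≤ n ∧ ∃ c : P, n • a = n • b + c) → ∃ d : P, a = b + d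

section Amalg

variable {P₁ P₂ P₃ : Type} [AddCommMonoid P₁] [AddCommMonoid P₂] [AddCommMonoid P₃]

/-- The congruence on `P₁ ⊕ P₂` generated by `(u₁ p, 0) ~ (0, u₂ p)` for `p : P₃`. -/
def amalgCon (u₁ : P₃ →+ P₁) (u₂ : P₃ →+ P₂) : AddCon (P₁ × P₂) :=
  addConGen fun x y => ∃ p : P₃, x = (u₁ p, 0) ∧ y = (0, u₂ p)

/-- The amalgamated sum `P₁ ⊕_{P₃} P₂` in commutative monoids. -/
def Amalg (u₁ : P₃ →+ P₁) (u₂ : P₃ →+ P₂) : Type := (amalgCon u₁ u₂).Quotient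

instance (u₁ : P₃ →+ P₁) (u₂ : P₃ →+ P₂) : AddCommMonoid (Amalg u₁ u₂) :=
  inferInstanceAs (AddCommMonoid (amalgCon u₁ u₂).Quotient)

/-- The canonical map `P₁ → P₁ ⊕_{P₃} P₂`. -/
def amalgInl (u₁ : P₃ →+ P₁) (u₂ : P₃ →+ P₂) : P₁ →+ Amalg u₁ u₂ :=
  (amalgCon u₁ u₂).mk'.comp (AddMonoidHom.inl P₁ P₂)

/-- The canonical map `P₂ → P₁ ⊕_{P₃} P₂`. -/
def amalgInr (u₁ : P₃ →+ P₁) (u₂ : P₃ →+ P₂) : P₂ →+ Amalg u₁ u₂ :=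
  (amalgCon u₁ u₂).mk'.comp (AddMonoidHom.inr P₁ P₂)

/-- Data exhibiting a pushout of `u₁, u₂` in the category of fine saturated (fs) monoids,
computed as the saturation of the integralization of the amalgamated sum `P₁ ⊕_{P₃} P₂`:
`R` is fs, receives a map `θ` from the amalgamated sum which is universal among maps to
cancellative saturated monoids (this says exactly that `R` is the saturation of the
integralization of the amalgamated sum), and the resulting square satisfies the universal
property of the pushout among fs monoids. -/
structure FSPushoutData (u₁ : P₃ →+ P₁) (u₂ : P₃ →+ P₂) where
  /-- the underlying set of the fs pushout -/
  R : Type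
  [instAddCommMonoid : AddCommMonoid R]
  [instCancel : IsCancelAdd R]
  /-- `R` is finitely generated -/
  fg : AddMonoid.FG R
  /-- `R` is saturated -/
  saturated : IsSaturatedAddMonoid R
  /-- the canonical map from the amalgamated sum -/
  θ : Amalg u₁ u₂ →+ R
  /-- `θ : Amalg u₁ u₂ → R` is the universal map to a cancellative saturated monoid,
  i.e. `R` is the saturation of the integralization of the amalgamated sum -/
  satint_universal : ∀ (T : Type) [AddCommMonoid T] [IsCancelAdd T],
    IsSaturatedAddMonoid T → ∀ f : Amalg u₁ u₂ →+ T, ∃! g : R →+ T, g.comp θ = f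
  /-- the square commutes -/
  comm : (θ.comp (amalgInl u₁ u₂)).comp u₁ = (θ.comp (amalgInr u₁ u₂)).comp u₂
  /-- `R` satisfies the universal property of the pushout in the category of fs monoids -/
  pushout_universal : ∀ (T : Type) [AddCommMonoid T] [IsCancelAdd T],
    AddMonoid.FG T → IsSaturatedAddMonoid T →
    ∀ (t₁ : P₁ →+ T) (t₂ : P₂ →+ T), t₁.comp u₁ = t₂.comp u₂ →
      ∃! g : R →+ T,
        g.comp (θ.comp (amalgInl u₁ u₂)) = t₁ ∧ g.comp (θ.comp (amalgInr u₁ u₂)) = t₂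

end Amalg

/-!
In a group, the saturation of a submonoid `N` is the submonoid of all `x` with `n • x ∈ N` for
some `n ≠ 0`; the saturation of the integralization of `M` is the saturation of the image of `M` in
its Grothendieck group. A map from `M` to a cancellative saturated monoid `T` extends uniquely to
it: it extends to the Grothendieck groups, and saturation of `T` brings the image back into `T`.
Composing with the universal property of the amalgamated sum gives the pushout property.

Finite generation is Gordan's lemma. If `N` is generated by a finite set `s`, every element of the
saturation is an element of `N` plus some `y` with `n • y = ∑ a ∈ s, r a • a`, `r a < n`. Modulo
the finite torsion subgroup, such `y` lie in a bounded box of `ℤ^r`, so there are finitely many.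
-/

universe u

open Algebra

theorem Int.abs_le_sum_abs_of_nsmul_eq_sum {ι : Type*} {s : Finset ι} {n : ℕ} (hn : n ≠ 0)
    {r : ι → ℕ} (hr : ∀ i, r i < n) (c : ι → ℤ) {y : ℤ} (h : n • y = ∑ i ∈ s, r i • c i) :
    |y| ≤ ∑ i ∈ s, |c i| := by
  have hn₀ : (0 : ℤ) < n := by positivity
  refine le_of_mul_le_mul_left ?_ hn₀
  calc (n : ℤ) * |y| = |∑ i ∈ s, (r i : ℤ) * c i| := by
        rw [← Nat.abs_cast n, ← abs_mul, ← nsmul_eq_mul, h]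
        simp only [nsmul_eq_mul]
    _ ≤ ∑ i ∈ s, (r i : ℤ) * |c i| := by
        refine (Finset.abs_sum_le_sum_abs _ _).trans_eq (Finset.sum_congr rfl fun i _ => ?_)
        rw [abs_mul, Nat.abs_cast]
    _ ≤ ∑ i ∈ s, (n : ℤ) * |c i| :=
        Finset.sum_le_sum fun i _ => by gcongr; exact (hr i).le
    _ = n * ∑ i ∈ s, |c i| := (Finset.mul_sum _ _ _).symm

theorem AddMonoidHom.finite_preimage {G H : Type*} [AddGroup G] [AddGroup H] (φ : G →+ H)
    (hφ : (φ.ker : Set G).Finite) {s : Set H} (hs : s.Finite) : (φ ⁻¹' s).Finite := by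
  refine hs.preimage' fun v _ => ?_
  rcases (φ ⁻¹' {v}).eq_empty_or_nonempty with h | ⟨x₀, hx₀⟩
  · simp [h]
  refine (hφ.image (x₀ + ·)).subset fun x hx => ⟨-x₀ + x, ?_, add_neg_cancel_left x₀ x⟩
  simp_all [AddMonoidHom.mem_ker]

theorem AddGroup.FG.exists_finite_ker_pi_int (G : Type u) [AddCommGroup G] [AddGroup.FG G] :
    ∃ (ι : Type u) (_ : Finite ι) (φ : G →+ ι → ℤ), (φ.ker : Set G).Finite := by
  have : Module.Finite ℤ G := Module.Finite.iff_addGroup_fg.mpr ‹_›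
  set T := Submodule.torsion ℤ G
  have : Finite T := Module.finite_of_fg_torsion T Submodule.torsion_isTorsion
  let b := Module.Free.chooseBasis ℤ (G ⧸ T)
  refine ⟨_, inferInstance, (b.equivFun.toLinearMap ∘ₗ T.mkQ).toAddMonoidHom,
    (Set.toFinite (T : Set G)).subset fun x hx => ?_⟩
  simpa [AddMonoidHom.mem_ker] using hx

namespace AddSubmonoid

section AddCommMonoid

variable {G : Type*} [AddCommMonoid G]

def nsmulSaturation (N : AddSubmonoid G) : AddSubmonoid G where
  carrier := {x | ∃ n ≠ 0, n • x ∈ N}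
  zero_mem' := ⟨1, one_ne_zero, by simp⟩
  add_mem' := by
    rintro x y ⟨n, hn, hx⟩ ⟨m, hm, hy⟩
    refine ⟨m * n, mul_ne_zero hm hn, ?_⟩
    rw [smul_add, ← smul_smul m n x, mul_comm, ← smul_smul n m y]
    exact N.add_mem (N.nsmul_mem hx m) (N.nsmul_mem hy n)

theorem le_nsmulSaturation (N : AddSubmonoid G) : N ≤ N.nsmulSaturation :=
  fun x hx => ⟨1, one_ne_zero, by rwa [one_nsmul]⟩

theorem nsmulSaturation_mono {N N' : AddSubmonoid G} (h : N ≤ N') :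
    N.nsmulSaturation ≤ N'.nsmulSaturation :=
  fun _ ⟨n, hn, hx⟩ => ⟨n, hn, h hx⟩

theorem nsmulSaturated_nsmulSaturation (N : AddSubmonoid G) :
    N.nsmulSaturation.NSMulSaturated := by
  rintro n x ⟨m, hm, hx⟩
  refine or_iff_not_imp_left.mpr fun hn => ⟨m * n, mul_ne_zero hm hn, ?_⟩
  rwa [← smul_smul]

theorem map_nsmulSaturation_le {H : Type*} [AddCommMonoid H] (N : AddSubmonoid G) (φ : G →+ H) :
    N.nsmulSaturation.map φ ≤ (N.map φ).nsmulSaturation := by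
  rintro _ ⟨x, ⟨n, hn, hx⟩, rfl⟩
  exact ⟨n, hn, n • x, hx, map_nsmul φ n x⟩

end AddCommMonoid

section AddCommGroup

variable {G : Type*} [AddCommGroup G]

theorem NSMulSaturated.isSaturatedAddMonoid {N : AddSubmonoid G} (hN : N.NSMulSaturated) :
    IsSaturatedAddMonoid N := by
  rintro a b ⟨n, hn, c, h⟩
  have h' : n • (a : G) = n • b + c := by simpa using congr(($h : G))
  have hc : n • ((a : G) - b) ∈ N := by
    rw [smul_sub, h', add_sub_cancel_left]
    exact c.2
  exact ⟨⟨a - b, (hN hc).resolve_left (by omega)⟩, Subtype.ext (add_sub_cancel _ _).symm⟩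

theorem exists_nsmul_sub_eq_sum_of_mem_nsmulSaturation_closure {s : Finset G} {x : G}
    (hx : x ∈ (closure (s : Set G)).nsmulSaturation) :
    ∃ z ∈ closure (s : Set G), ∃ n ≠ 0, ∃ r : G → ℕ,
      (∀ a, r a < n) ∧ n • (x - z) = ∑ a ∈ s, r a • a := by
  obtain ⟨n, hn, hnx⟩ := hx
  obtain ⟨c, -, hc⟩ := mem_closure_finset.mp hnx
  refine ⟨∑ a ∈ s, (c a / n) • a, _root_.sum_mem fun a ha => nsmul_mem (subset_closure ha) _,
    n, hn, fun a => c a % n, fun a => Nat.mod_lt _ (Nat.pos_of_ne_zero hn), ?_⟩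
  rw [smul_sub, ← hc, Finset.smul_sum, ← Finset.sum_sub_distrib]
  refine Finset.sum_congr rfl fun a _ => ?_
  rw [smul_smul, sub_eq_iff_eq_add', ← add_smul, Nat.div_add_mod]

end AddCommGroup

theorem FG.nsmulSaturation {G : Type u} [AddCommGroup G] [AddGroup.FG G] {N : AddSubmonoid G}
    (hN : N.FG) : N.nsmulSaturation.FG := by
  obtain ⟨s, rfl⟩ := hN
  obtain ⟨ι, _, φ, hφ⟩ := AddGroup.FG.exists_finite_ker_pi_int G
  set box := Set.univ.pi fun i => Set.Icc (-∑ a ∈ s, |φ a i|) (∑ a ∈ s, |φ a i|)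
  set K := ((closure (s : Set G)).nsmulSaturation : Set G) ∩ φ ⁻¹' box
  have hK : K.Finite :=
    (φ.finite_preimage hφ (Set.Finite.pi fun i => Set.finite_Icc _ _)).inter_of_right _
  refine (fg_iff _).mpr ⟨s ∪ K, le_antisymm ?_ fun x hx => ?_, s.finite_toSet.union hK⟩
  · rw [closure_le]
    exact Set.union_subset (subset_closure.trans (le_nsmulSaturation _)) Set.inter_subset_left
  obtain ⟨z, hz, n, hn, r, hr, hsum⟩ := exists_nsmul_sub_eq_sum_of_mem_nsmulSaturation_closure hx
  have hxz : x - z ∈ K := by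
    refine ⟨⟨n, hn, hsum ▸ _root_.sum_mem fun a ha => nsmul_mem (subset_closure ha) _⟩,
      fun i _ => ?_⟩
    refine abs_le.mp (Int.abs_le_sum_abs_of_nsmul_eq_sum hn hr _ ?_)
    simpa using congr($(congrArg φ hsum) i)
  rw [← add_sub_cancel z x]
  exact add_mem (closure_mono Set.subset_union_left hz) (subset_closure (Or.inr hxz))

end AddSubmonoid

namespace Algebra.GrothendieckAddGroup

variable {M : Type*} [AddCommMonoid M]

theorem exists_add_of_eq_of (x : GrothendieckAddGroup M) : ∃ a b : M, x + of b = of a := by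
  obtain ⟨⟨a, b⟩, h⟩ := (AddLocalization.addMonoidOf ⊤).surj x
  exact ⟨a, b, h⟩

theorem lift_of {A : Type*} [AddCommGroup A] (f : M →+ A) (m : M) : lift f (of m) = f m :=
  congr($(lift.symm_apply_apply f) m)

end Algebra.GrothendieckAddGroup

open GrothendieckAddGroup AddSubmonoid

theorem IsSaturatedAddMonoid.nsmulSaturation_mrange_of_le {T : Type*} [AddCommMonoid T]
    [IsCancelAdd T] (hT : IsSaturatedAddMonoid T) :
    (AddMonoidHom.mrange (of : T →+ GrothendieckAddGroup T)).nsmulSaturation ≤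
      AddMonoidHom.mrange of := by
  rintro z ⟨n, hn, t, ht⟩
  obtain ⟨a, b, hab⟩ := exists_add_of_eq_of z
  have hsat : n • a = n • b + t := of_injective <| by
    rw [map_nsmul, ← hab, smul_add, ← ht, map_add, map_nsmul, add_comm]
  obtain ⟨d, rfl⟩ := hT a b ⟨n, Nat.one_le_iff_ne_zero.mpr hn, t, hsat⟩
  exact ⟨d, add_right_cancel (b := of b) (by rw [← map_add, add_comm, hab])⟩

section SatIntegralization

variable (M : Type*) [AddCommMonoid M]

def satIntegralization : AddSubmonoid (GrothendieckAddGroup M) :=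
  (AddMonoidHom.mrange of).nsmulSaturation

def toSatIntegralization : M →+ satIntegralization M :=
  of.codRestrict _ fun m => le_nsmulSaturation _ ⟨m, rfl⟩

variable {M}

theorem isSaturatedAddMonoid_satIntegralization : IsSaturatedAddMonoid (satIntegralization M) :=
  (nsmulSaturated_nsmulSaturation _).isSaturatedAddMonoid

theorem satIntegralization_fg [AddMonoid.FG M] : AddMonoid.FG (satIntegralization M) := by
  have : AddGroup.FG (GrothendieckAddGroup M) := AddGroup.fg_iff_addMonoid_fg.mpr inferInstance
  refine (AddMonoid.fg_iff_addSubmonoid_fg _).mpr (FG.nsmulSaturation ?_)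
  rw [AddMonoidHom.mrange_eq_map]
  exact AddMonoid.FG.fg_top.map _

theorem satIntegralization_hom_ext {T : Type*} [AddCommMonoid T] [IsCancelAdd T]
    {g g' : satIntegralization M →+ T}
    (h : g.comp (toSatIntegralization M) = g'.comp (toSatIntegralization M)) : g = g' := by
  ext x
  obtain ⟨a, b, hab⟩ := exists_add_of_eq_of (x : GrothendieckAddGroup M)
  have hx : x + toSatIntegralization M b = toSatIntegralization M a := Subtype.ext hab
  have key : ∀ g : satIntegralization M →+ T,
      g x + g (toSatIntegralization M b) = g (toSatIntegralization M a) := by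
    intro g; rw [← map_add, hx]
  refine add_right_cancel (b := g (toSatIntegralization M b)) ?_
  have hg : ∀ m, g (toSatIntegralization M m) = g' (toSatIntegralization M m) :=
    fun m => congr($h m)
  rw [key, hg, hg, key]

theorem existsUnique_comp_toSatIntegralization_eq {T : Type*} [AddCommMonoid T] [IsCancelAdd T]
    (hT : IsSaturatedAddMonoid T) (f : M →+ T) :
    ∃! g : satIntegralization M →+ T, g.comp (toSatIntegralization M) = f := by
  set F := lift ((of : T →+ GrothendieckAddGroup T).comp f)
  have hmap : (AddMonoidHom.mrange of).map F ≤ AddMonoidHom.mrange of := by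
    rintro _ ⟨_, ⟨m, rfl⟩, rfl⟩
    exact ⟨f m, (lift_of (of.comp f) m).symm⟩
  have hF : ∀ x ∈ satIntegralization M, F x ∈ AddMonoidHom.mrange (of : T →+ _) := fun x hx =>
    hT.nsmulSaturation_mrange_of_le
      (nsmulSaturation_mono hmap (map_nsmulSaturation_le _ F ⟨x, hx, rfl⟩))
  let e : T ≃+ AddMonoidHom.mrange (of : T →+ _) := AddEquiv.ofBijective of.mrangeRestrict
    ⟨fun a b h => of_injective congr(($h : GrothendieckAddGroup T)), of.mrangeRestrict_surjective⟩
  let g := e.symm.toAddMonoidHom.comp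
    ((F.comp (satIntegralization M).subtype).codRestrict _ fun x => hF x x.2)
  have hg : g.comp (toSatIntegralization M) = f := by
    ext m
    exact e.symm_apply_eq.mpr (Subtype.ext (lift_of _ m))
  exact ⟨g, hg, fun g' hg' => satIntegralization_hom_ext (hg'.trans hg.symm)⟩

end SatIntegralization

section Amalg

variable {P₁ P₂ P₃ : Type} [AddCommMonoid P₁] [AddCommMonoid P₂] [AddCommMonoid P₃]
  {u₁ : P₃ →+ P₁} {u₂ : P₃ →+ P₂} {T : Type*} [AddCommMonoid T]

theorem amalgInl_comp_eq_amalgInr_comp (u₁ : P₃ →+ P₁) (u₂ : P₃ →+ P₂) :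
    (amalgInl u₁ u₂).comp u₁ = (amalgInr u₁ u₂).comp u₂ := by
  ext p
  exact (amalgCon u₁ u₂).eq.mpr (AddConGen.Rel.of _ _ ⟨p, rfl, rfl⟩)

def amalgLift (t₁ : P₁ →+ T) (t₂ : P₂ →+ T) (h : t₁.comp u₁ = t₂.comp u₂) :
    Amalg u₁ u₂ →+ T :=
  (amalgCon u₁ u₂).lift (t₁.coprod t₂) <| AddCon.addConGen_le.mpr <| by
    rintro _ _ ⟨p, rfl, rfl⟩
    simpa using congr($h p)

theorem amalgLift_comp_amalgInl (t₁ : P₁ →+ T) (t₂ : P₂ →+ T) (h : t₁.comp u₁ = t₂.comp u₂) :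
    (amalgLift t₁ t₂ h).comp (amalgInl u₁ u₂) = t₁ :=
  t₁.coprod_comp_inl t₂

theorem amalgLift_comp_amalgInr (t₁ : P₁ →+ T) (t₂ : P₂ →+ T) (h : t₁.comp u₁ = t₂.comp u₂) :
    (amalgLift t₁ t₂ h).comp (amalgInr u₁ u₂) = t₂ :=
  t₁.coprod_comp_inr t₂

theorem exists_amalgInl_add_amalgInr_eq (x : Amalg u₁ u₂) :
    ∃ a b, amalgInl u₁ u₂ a + amalgInr u₁ u₂ b = x := by
  obtain ⟨⟨a, b⟩, rfl⟩ := AddCon.mk'_surjective (c := amalgCon u₁ u₂) x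
  refine ⟨a, b, ?_⟩
  show (amalgCon u₁ u₂).mk' (a, 0) + (amalgCon u₁ u₂).mk' (0, b) = (amalgCon u₁ u₂).mk' (a, b)
  rw [← map_add, Prod.mk_add_mk, add_zero, zero_add]

theorem amalg_hom_ext {f g : Amalg u₁ u₂ →+ T}
    (h₁ : f.comp (amalgInl u₁ u₂) = g.comp (amalgInl u₁ u₂))
    (h₂ : f.comp (amalgInr u₁ u₂) = g.comp (amalgInr u₁ u₂)) : f = g := by
  ext x
  obtain ⟨a, b, rfl⟩ := exists_amalgInl_add_amalgInr_eq x
  rw [map_add, map_add]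
  exact congr_arg₂ (· + ·) (DFunLike.congr_fun h₁ a) (DFunLike.congr_fun h₂ b)

instance [AddMonoid.FG P₁] [AddMonoid.FG P₂] : AddMonoid.FG (Amalg u₁ u₂) :=
  AddMonoid.fg_of_surjective (amalgCon u₁ u₂).mk' AddCon.mk'_surjective

theorem existsUnique_satIntegralization_amalg [IsCancelAdd T] (hT : IsSaturatedAddMonoid T)
    (t₁ : P₁ →+ T) (t₂ : P₂ →+ T) (h : t₁.comp u₁ = t₂.comp u₂) :
    ∃! g : satIntegralization (Amalg u₁ u₂) →+ T,
      g.comp ((toSatIntegralization _).comp (amalgInl u₁ u₂)) = t₁ ∧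
        g.comp ((toSatIntegralization _).comp (amalgInr u₁ u₂)) = t₂ := by
  obtain ⟨g, hg, hg_unique⟩ := existsUnique_comp_toSatIntegralization_eq hT (amalgLift t₁ t₂ h)
  refine ⟨g, ?_, fun g' ⟨h₁, h₂⟩ => hg_unique g' (amalg_hom_ext ?_ ?_)⟩
  · simp only [← AddMonoidHom.comp_assoc, hg, amalgLift_comp_amalgInl, amalgLift_comp_amalgInr,
      and_self]
  · rwa [amalgLift_comp_amalgInl]
  · rwa [amalgLift_comp_amalgInr]

end Amalg

theorem fs_pushout_exists_general (P₁ P₂ P₃ : Type)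
    [AddCancelCommMonoid P₁] [AddCancelCommMonoid P₂] [AddCancelCommMonoid P₃]
    (h₁fg : AddMonoid.FG P₁) (h₂fg : AddMonoid.FG P₂)
    (u₁ : P₃ →+ P₁) (u₂ : P₃ →+ P₂) :
    Nonempty (FSPushoutData u₁ u₂) := by
  exact ⟨{
    R := satIntegralization (Amalg u₁ u₂)
    fg := satIntegralization_fg
    saturated := isSaturatedAddMonoid_satIntegralization
    θ := toSatIntegralization _
    satint_universal := fun _ _ _ hT f => existsUnique_comp_toSatIntegralization_eq hT f
    comm := by
      rw [AddMonoidHom.comp_assoc, AddMonoidHom.comp_assoc, amalgInl_comp_eq_amalgInr_comp]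
    pushout_universal := fun _ _ _ _ hT t₁ t₂ h =>
      existsUnique_satIntegralization_amalg hT t₁ t₂ h }⟩

/-- Let `u₁ : P₃ → P₁` and `u₂ : P₃ → P₂` be homomorphisms of fine
saturated monoids.  Then the pushout of `u₁` and `u₂` exists in the category of fs monoids,
and it is computed as the saturation of the integralization of the amalgamated sum
`P₁ ⊕_{P₃} P₂` taken in commutative monoids. -/
theorem fs_pushout_exists (P₁ P₂ P₃ : Type)
    [AddCancelCommMonoid P₁] [AddCancelCommMonoid P₂] [AddCancelCommMonoid P₃]
    (h₁fg : AddMonoid.FG P₁) (h₂fg : AddMonoid.FG P₂) (h₃fg : AddMonoid.FG P₃)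
    (h₁sat : IsSaturatedAddMonoid P₁) (h₂sat : IsSaturatedAddMonoid P₂)
    (h₃sat : IsSaturatedAddMonoid P₃)
    (u₁ : P₃ →+ P₁) (u₂ : P₃ →+ P₂) :
    Nonempty (FSPushoutData u₁ u₂) :=
  fs_pushout_exists_general P₁ P₂ P₃ h₁fg h₂fg u₁ u₂
end

section
/- Let q : ℕ^{n₁} → P be a surjective homomorphism of commutative monoids with P fine saturated and sharp, and suppose P possesses m irreducible elements. Then for each irreducible element α of P there is a (not necessarily unique) injective monoid homomorphism ℕ → P sending 1 to α, and these homomorphisms jointly generate: the induced homomorphism ℕ^m → P, sending the i-th generator to the i-th irreducible element, is surjective. -/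
/-- `P` is *sharp* if its only unit is `0`. -/
def IsSharpAddMonoid (P : Type*) [AddCommMonoid P] : Prop :=
  ∀ p q : P, p + q = 0 → p = 0

/-- `p` is irreducible: nonzero, and not a sum of two nonzero elements. -/
def IsIrreducibleElem {P : Type*} [AddCommMonoid P] (p : P) : Prop :=
  p ≠ 0 ∧ ∀ a b : P, p = a + b → a = 0 ∨ b = 0

/-!
Additive divisibility on `P` is the image under `q` of the product order on `ℕ^{n₁}`, hence a
well-quasi-order by Dickson's lemma. In a sharp cancellative monoid a proper summand is strictly
smaller for it, so well-founded induction writes every element as a sum of irreducibles. Sharpness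
also gives `k • α ≠ 0` for `k ≠ 0` and `α ≠ 0`, which makes `n ↦ n • α` injective.
-/

theorem IsSharpAddMonoid.eq_zero_of_nsmul_eq_zero {P : Type*} [AddCommMonoid P]
    (hsharp : IsSharpAddMonoid P) {α : P} {k : ℕ} (hk : k ≠ 0) (h : k • α = 0) : α = 0 := by
  obtain ⟨k, rfl⟩ := Nat.exists_eq_succ_of_ne_zero hk
  exact hsharp α (k • α) (by rwa [succ_nsmul'] at h)

theorem IsSharpAddMonoid.nsmul_left_injective {P : Type*} [AddCancelCommMonoid P]
    (hsharp : IsSharpAddMonoid P) {α : P} (hα : α ≠ 0) :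
    Function.Injective (· • α : ℕ → P) := by
  refine Function.Injective.of_lt_imp_ne fun a b hab h => ?_
  obtain ⟨k, rfl⟩ := Nat.exists_eq_add_of_lt hab
  rw [add_assoc, add_nsmul, left_eq_add] at h
  exact hα (hsharp.eq_zero_of_nsmul_eq_zero (Nat.succ_ne_zero k) h)

theorem wellQuasiOrdered_addDvd_of_surjective {M P : Type*} [AddCommMonoid M] [Preorder M]
    [ExistsAddOfLE M] [WellQuasiOrderedLE M] [AddCommMonoid P] (q : M →+ P)
    (hq : Function.Surjective q) : WellQuasiOrdered fun a b : P => ∃ c, b = a + c :=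
  wellQuasiOrdered_le.of_surjective ⟨q, fun {x y} hxy => by
    obtain ⟨z, rfl⟩ := exists_add_of_le hxy
    exact ⟨q z, map_add q x z⟩⟩ hq

theorem IsSharpAddMonoid.wellFounded_properSummand {P : Type*} [AddCancelCommMonoid P]
    (hsharp : IsSharpAddMonoid P) (hwqo : WellQuasiOrdered fun a b : P => ∃ c, b = a + c) :
    WellFounded fun a b : P => ∃ c, c ≠ 0 ∧ b = a + c := by
  have : IsPreorder P fun a b => ∃ c, b = a + c :=
    { refl := fun a => ⟨0, (add_zero a).symm⟩
      trans := fun a b c ⟨d, hd⟩ ⟨e, he⟩ => ⟨d + e, by rw [he, hd, add_assoc]⟩ }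
  refine Subrelation.wf (fun {a b} ⟨c, hc, hb⟩ => ⟨⟨c, hb⟩, fun ⟨d, ha⟩ => hc ?_⟩) hwqo.wellFounded
  rw [hb, add_assoc, left_eq_add] at ha
  exact hsharp c d ha

theorem mem_closure_isIrreducibleElem_of_wellFounded {P : Type*} [AddCommMonoid P]
    (hwf : WellFounded fun a b : P => ∃ c, c ≠ 0 ∧ b = a + c) (p : P) :
    p ∈ AddSubmonoid.closure {p | IsIrreducibleElem p} := by
  induction p using hwf.induction with
  | _ p ih =>
    by_cases hp : p = 0
    · exact hp ▸ zero_mem _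
    by_cases hirr : IsIrreducibleElem p
    · exact AddSubmonoid.subset_closure hirr
    obtain ⟨a, b, rfl, ha, hb⟩ : ∃ a b, p = a + b ∧ a ≠ 0 ∧ b ≠ 0 := by
      simpa [IsIrreducibleElem, hp] using hirr
    exact add_mem (ih a ⟨b, hb, rfl⟩) (ih b ⟨a, ha, add_comm a b⟩)

theorem irreducibles_give_surjection_general (n₁ : ℕ) (P : Type) [AddCancelCommMonoid P]
    (hsharp : IsSharpAddMonoid P)
    (q : (Fin n₁ → ℕ) →+ P) (hq : Function.Surjective q)
    (m : ℕ) (ir : Fin m ≃ {p : P // IsIrreducibleElem p}) :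
    (∀ α : P, IsIrreducibleElem α →
      ∃ f : ℕ →+ P, f 1 = α ∧ Function.Injective f) ∧
    Function.Surjective (fun v : Fin m → ℕ => ∑ i : Fin m, v i • ((ir i : {p : P // IsIrreducibleElem p}) : P)) := by
  refine ⟨fun α hα => ⟨multiplesHom P α, one_nsmul α, hsharp.nsmul_left_injective hα.1⟩,
    fun p => ?_⟩
  have hwf := hsharp.wellFounded_properSummand (wellQuasiOrdered_addDvd_of_surjective q hq)
  have hrange : Set.range (fun i => (ir i : P)) = {p | IsIrreducibleElem p} :=
    (ir.surjective.range_comp Subtype.val).trans Subtype.range_coe_subtype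
  obtain ⟨v, hv⟩ := AddSubmonoid.mem_closure_range_iff_of_fintype.mp
    (hrange ▸ mem_closure_isIrreducibleElem_of_wellFounded hwf p)
  exact ⟨v, hv.symm⟩

/-- Let `q : ℕ^{n₁} → P` be a surjective homomorphism with `P` fine,
saturated and sharp, and suppose `P` has `m` irreducible elements (enumerated by
`ir : Fin m ≃ {irreducibles}`).  Then for each irreducible `α` there is an injective monoid
homomorphism `ℕ → P` sending `1` to `α`, and the induced homomorphism `ℕ^m → P`, sending the
`i`-th generator to the `i`-th irreducible element, is surjective. -/
theorem irreducibles_give_surjection (n₁ : ℕ) (P : Type) [AddCancelCommMonoid P]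
    (hfg : AddMonoid.FG P) (hsat : IsSaturatedAddMonoid P) (hsharp : IsSharpAddMonoid P)
    (q : (Fin n₁ → ℕ) →+ P) (hq : Function.Surjective q)
    (m : ℕ) (ir : Fin m ≃ {p : P // IsIrreducibleElem p}) :
    (∀ α : P, IsIrreducibleElem α →
      ∃ f : ℕ →+ P, f 1 = α ∧ Function.Injective f) ∧
    Function.Surjective (fun v : Fin m → ℕ => ∑ i : Fin m, v i • ((ir i : {p : P // IsIrreducibleElem p}) : P)) :=
  irreducibles_give_surjection_general n₁ P hsharp q hq m ir
end
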